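/- arXiv:2510.27686 — 3 statements merged into one kernel-verified Lean document; each statement's English description precedes it below -/
import Mathlib

section
/- Let F : ℝ^d → ℝ^d be C¹ with F(0) = 0, and suppose there exist constants C₁, C₄, r > 0 such that on the ball B(0, C₁ r) the Jacobian DF(x) is invertible and satisfies |DF(x)v| ≥ C₄ r |v| for all v. Then the image F(B(0, C₁ r)) contains the ball B(0, C₁ C₄ r²). -/
/-!
Fix `c < C₄ r` with `‖y‖ < c C₁ r`. At every point of `B(0, C₁ r)` the derivative has a right
inverse of norm `(C₄ r)⁻¹`, so by the quantitative local surjectivity behind the inverse function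
theorem, `F` maps each small ball `B̄(x, ε)` onto a set containing `B̄(F x, c ε)`. Lift the
segment from `0` to `y` at speed `‖y‖ / c`: by compactness there is a maximal time up to which
the lift stays in `B̄(0, ‖y‖ / c)`, and local surjectivity at the lifted point shows it is `1`.
-/

open Set Metric Filter Topology AffineMap

section LocalSurjectivity

variable {𝕜 E F : Type*} [NontriviallyNormedField 𝕜] [NormedAddCommGroup E] [NormedSpace 𝕜 E]
  [NormedAddCommGroup F] [NormedSpace 𝕜 F]

noncomputable def ContinuousLinearMap.nonlinearRightInverseOfLowerBound (A : E →L[𝕜] F)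
    (hA : Function.Surjective A) {m : ℝ} (hm : 0 < m) (hlow : ∀ v, m * ‖v‖ ≤ ‖A v‖) :
    A.NonlinearRightInverse where
  toFun := Function.surjInv hA
  nnnorm := ⟨m⁻¹, inv_nonneg.2 hm.le⟩
  bound' w := by
    have h := hlow (Function.surjInv hA w)
    rw [Function.surjInv_eq hA] at h
    change _ ≤ m⁻¹ * ‖w‖
    rwa [inv_mul_eq_div, le_div_iff₀' hm]
  right_inv' := Function.surjInv_eq hA

theorem HasStrictFDerivAt.eventually_closedBall_subset_image [CompleteSpace E] {f : E → F}
    {f' : E →L[𝕜] F} {x : E} (hf : HasStrictFDerivAt f f' x) (g : f'.NonlinearRightInverse)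
    {c : ℝ} (hc : c < (g.nnnorm : ℝ)⁻¹) :
    ∀ᶠ ε in 𝓝[>] 0, closedBall (f x) (c * ε) ⊆ f '' closedBall x ε := by
  have hδ : 0 < (g.nnnorm : ℝ)⁻¹ - c := sub_pos.2 hc
  obtain ⟨s, hs, hfs⟩ := hf.approximates_deriv_on_nhds (Or.inr (Real.toNNReal_pos.2 hδ))
  obtain ⟨R, hR, hRs⟩ := nhds_basis_closedBall.mem_iff.1 hs
  filter_upwards [Ioc_mem_nhdsGT hR] with ε hε
  have h := hfs.surjOn_closedBall_of_nonlinearRightInverse g hε.1.le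
    ((closedBall_subset_closedBall hε.2).trans hRs)
  rwa [Real.coe_toNNReal _ hδ.le, sub_sub_cancel] at h

end LocalSurjectivity

theorem ball_subset_image_ball_of_eventually_closedBall_subset_image {X F : Type*}
    [PseudoMetricSpace X] [ProperSpace X] [NormedAddCommGroup F] [NormedSpace ℝ F]
    {f : X → F} {a : X} {ρ c : ℝ} (hf : ContinuousOn f (ball a ρ)) (hc : 0 < c)
    (hloc : ∀ x ∈ ball a ρ, ∀ᶠ ε in 𝓝[>] 0, closedBall (f x) (c * ε) ⊆ f '' closedBall x ε) :
    ball (f a) (c * ρ) ⊆ f '' ball a ρ := by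
  intro y hy
  have hρ : 0 < ρ := pos_of_mul_pos_right (nonempty_ball.1 ⟨y, hy⟩) hc.le
  rcases eq_or_ne y (f a) with rfl | hya
  · exact mem_image_of_mem f (mem_ball_self hρ)
  set ρ' := dist y (f a) / c
  have hρ' : 0 < ρ' := div_pos (dist_pos.2 hya) hc
  have hρ'ρ : ρ' < ρ := (div_lt_iff₀' hc).2 (mem_ball.1 hy)
  have hdist : dist (f a) y = c * ρ' := by rw [dist_comm, mul_div_cancel₀ _ hc.ne']
  -- `(t, x) ∈ K`: `f x` is the point at time `t` of the segment `[f a, y]`, and `dist x a ≤ t ρ'`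
  set K : Set (ℝ × X) := (Icc 0 1 ×ˢ closedBall a ρ' ∩ {p | dist p.2 a ≤ p.1 * ρ'}) ∩
    (fun p ↦ (f p.2, lineMap (f a) y p.1)) ⁻¹' diagonal F
  have hK : IsCompact K := by
    refine ((isCompact_Icc.prod (isCompact_closedBall a ρ')).inter_right
      (isClosed_le (by fun_prop) (by fun_prop))).of_isClosed_subset ?_ inter_subset_left
    refine ContinuousOn.preimage_isClosed_of_isClosed ?_
      ((isClosed_Icc.prod isClosed_closedBall).inter (isClosed_le (by fun_prop) (by fun_prop)))
      isClosed_diagonal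
    refine ((hf.mono (closedBall_subset_ball hρ'ρ)).comp continuousOn_snd ?_).prodMk
      (by fun_prop : Continuous fun p : ℝ × X ↦ lineMap (f a) y p.1).continuousOn
    exact fun p hp ↦ hp.1.2
  have hK₀ : ((0 : ℝ), a) ∈ K :=
    ⟨⟨⟨left_mem_Icc.2 zero_le_one, mem_closedBall_self hρ'.le⟩, by simp⟩, by simp⟩
  obtain ⟨⟨T, x₀⟩, hTx₀, hmax⟩ := hK.exists_isMaxOn ⟨_, hK₀⟩ continuous_fst.continuousOn
  obtain ⟨⟨⟨hT, hx₀⟩, hx₀a⟩, hx₀f⟩ : ((T ∈ Icc 0 1 ∧ x₀ ∈ closedBall a ρ') ∧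
    dist x₀ a ≤ T * ρ') ∧ f x₀ = lineMap (f a) y T := hTx₀
  have hx₀ball : x₀ ∈ ball a ρ := closedBall_subset_ball hρ'ρ hx₀
  rcases hT.2.eq_or_lt with rfl | hT1
  · exact ⟨x₀, hx₀ball, by rw [hx₀f, lineMap_apply_one]⟩
  obtain ⟨ε, hεf, hε, hε1⟩ := ((hloc x₀ hx₀ball).and
    (Ioc_mem_nhdsGT (mul_pos (sub_pos.2 hT1) hρ'))).exists
  have hstep : lineMap (f a) y (T + ε / ρ') ∈ closedBall (f x₀) (c * ε) := by
    rw [mem_closedBall, hx₀f, dist_lineMap_lineMap, hdist, Real.dist_eq, add_sub_cancel_left,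
      abs_of_pos (div_pos hε hρ')]
    exact le_of_eq (by field_simp)
  obtain ⟨x, hx, hfx⟩ := hεf hstep
  have hnext : (T + ε / ρ', x) ∈ K := by
    have hε' : ε / ρ' ≤ 1 - T := (div_le_iff₀ hρ').2 hε1
    have hxa : dist x a ≤ (T + ε / ρ') * ρ' := by
      rw [add_mul, div_mul_cancel₀ _ hρ'.ne']
      exact (dist_triangle x x₀ a).trans (by linarith [mem_closedBall.1 hx])
    have ht : T + ε / ρ' ∈ Icc 0 1 := ⟨by linarith [hT.1, div_pos hε hρ'], by linarith⟩
    exact ⟨⟨⟨ht, hxa.trans (by nlinarith [ht.2])⟩, hxa⟩, hfx⟩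
  have hle : T + ε / ρ' ≤ T := hmax hnext
  linarith [div_pos hε hρ']

/-- Quantitative openness: if `F : ℝᵈ → ℝᵈ` is `C¹` with `F(0) = 0`, and on `B(0, C₁ r)`
the Jacobian `DF(x)` is invertible with `|DF(x)v| ≥ C₄ r |v|`, then the image
`F(B(0, C₁ r))` contains the ball `B(0, C₁ C₄ r²)`. -/
theorem stmt5 (d : ℕ) (F : EuclideanSpace ℝ (Fin d) → EuclideanSpace ℝ (Fin d))
    (r C₁ C₄ : ℝ) (hr : 0 < r) (hC₁ : 0 < C₁) (hC₄ : 0 < C₄)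
    (hF : ContDiff ℝ 1 F) (hF0 : F 0 = 0)
    (hinv : ∀ x ∈ Metric.ball (0 : EuclideanSpace ℝ (Fin d)) (C₁ * r),
      Function.Bijective (fderiv ℝ F x) ∧ ∀ v, C₄ * r * ‖v‖ ≤ ‖fderiv ℝ F x v‖) :
    Metric.ball (0 : EuclideanSpace ℝ (Fin d)) (C₁ * C₄ * r ^ 2) ⊆
      F '' Metric.ball 0 (C₁ * r) := by
  intro y hy
  have hC₁r : 0 < C₁ * r := by positivity
  have hy' : ‖y‖ / (C₁ * r) < C₄ * r := by
    rw [div_lt_iff₀ hC₁r]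
    linarith [mem_ball_zero_iff.1 hy]
  obtain ⟨c, hyc, hc⟩ := exists_between hy'
  have hloc : ∀ x ∈ ball 0 (C₁ * r),
      ∀ᶠ ε in 𝓝[>] 0, closedBall (F x) (c * ε) ⊆ F '' closedBall x ε := fun x hx ↦
    (hF.contDiffAt.hasStrictFDerivAt one_ne_zero).eventually_closedBall_subset_image
      ((fderiv ℝ F x).nonlinearRightInverseOfLowerBound (hinv x hx).1.2 (by positivity)
        (hinv x hx).2)
      (hc.trans_eq (inv_inv _).symm)
  have hcover := ball_subset_image_ball_of_eventually_closedBall_subset_image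
    hF.continuous.continuousOn ((div_nonneg (norm_nonneg y) hC₁r.le).trans_lt hyc) hloc
  rw [hF0] at hcover
  exact hcover (mem_ball_zero_iff.2 ((div_lt_iff₀ hC₁r).1 hyc))
end

section
/- Quantitative implicit function theorem: Let G : ℝ^{d₁+d₂} → ℝ^{d₂} be C², let (x₀, y₀) satisfy G(x₀, y₀) = 0, and suppose D ≥ max(1, ‖G‖_{C²}) and 0 < r ≤ |det D_y G(x₀, y₀)|. Then there is a constant C(d₁+d₂) depending only on the total dimension such that, with C₂ = C(d₁+d₂) D^{-2(d₁+d₂)+1}, there exists a C¹ function H : B(x₀, C₂ r²) → ℝ^{d₂} with G(x, H(x)) = 0 and |det D_y G(x, H(x))| ≥ r/2 for every x ∈ B(x₀, C₂ r²). -/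
/-!
Write `A = D_y G(x₀, y₀)` and `n = d₂`. By Cramer's rule `A⁻¹ = adj A / det A`, and the adjugate
is homogeneous of degree `n - 1`, so `‖A⁻¹‖ ≤ K := c D^{n-1} / r`. For `‖x - x₀‖ ≤ ρ` and
`‖y - y₀‖ ≤ ε := δ / (K D)`, the Lipschitz bound on `DG` makes `y ↦ G(x, y)` approximate `A` up to
`D ε = δ / K`; the quantitative inverse function theorem then yields exactly one zero `H(x)` in
that ball as soon as `ρ ≍ ε / (K D) ≍ r² / D^{2n}`. Writing `D_y G(x, H x) = A (1 + P)` with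
`‖P‖ ≤ δ` shows that the determinant drops by at most a factor `1/2`, and the implicit
function theorem at each `(x, H x)`, combined with uniqueness, shows that `H` is `C¹`.
The dimensional constant `c` comes from compactness of the unit ball of `End F`, and `δ` from
continuity of the determinant at the identity.
-/

open Metric Filter Topology ContinuousLinearMap

theorem exists_norm_le_mul_norm_pow_of_homogeneous {V W : Type*} [NormedAddCommGroup V]
    [NormedSpace ℝ V] [FiniteDimensional ℝ V] [NormedAddCommGroup W] [NormedSpace ℝ W]
    {f : V → W} (hf : Continuous f) {k : ℕ}
    (hk : ∀ (t : ℝ) (v : V), 0 ≤ t → f (t • v) = t ^ k • f v) :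
    ∃ C, 0 < C ∧ ∀ v, ‖f v‖ ≤ C * ‖v‖ ^ k := by
  obtain ⟨C, hC⟩ := (isCompact_closedBall (0 : V) 1).exists_bound_of_continuousOn hf.continuousOn
  refine ⟨max C 1, by positivity, fun v => ?_⟩
  obtain ⟨u, hu, huv⟩ : ∃ u ∈ closedBall (0 : V) 1, ‖v‖ • u = v := by
    rcases eq_or_ne v 0 with rfl | hv
    · exact ⟨0, by simp, by simp⟩
    · refine ⟨‖v‖⁻¹ • v, ?_, by simp [smul_smul, hv]⟩
      simp [norm_smul, hv]
  calc ‖f v‖ = ‖v‖ ^ k * ‖f u‖ := by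
        conv_lhs => rw [← huv, hk _ _ (norm_nonneg v), norm_smul, norm_pow, norm_norm]
    _ ≤ max C 1 * ‖v‖ ^ k := by
        rw [mul_comm]
        exact mul_le_mul_of_nonneg_right ((hC u hu).trans (le_max_left _ _)) (by positivity)

section LinearAlgebra

variable {F : Type*} [NormedAddCommGroup F] [NormedSpace ℝ F]

namespace ContinuousLinearMap

theorem det_comp (S T : F →L[ℝ] F) : (S ∘L T).det = S.det * T.det :=
  LinearMap.det_comp (S : F →ₗ[ℝ] F) T

theorem exists_half_le_abs_det_one_add :
    ∃ δ, 0 < δ ∧ ∀ P : F →L[ℝ] F, ‖P‖ ≤ δ → 1 / 2 ≤ |(1 + P).det| := by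
  have hc : ContinuousAt (fun P : F →L[ℝ] F => (1 + P).det) 0 :=
    (continuous_det.comp (continuous_const.add continuous_id)).continuousAt
  obtain ⟨δ, hδ, h⟩ := Metric.continuousAt_iff.mp hc (1 / 2) (by norm_num)
  refine ⟨δ / 2, by positivity, fun P hP => ?_⟩
  have := h (x := P) (by rw [dist_zero_right]; linarith)
  have hdet1 : (1 : F →L[ℝ] F).det = 1 := LinearMap.det_id
  rw [add_zero, hdet1, Real.dist_eq] at this
  linarith [(abs_sub_lt_iff.mp this).2, le_abs_self (1 + P).det]

theorem half_abs_det_le_abs_det {δ : ℝ}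
    (hδ : ∀ P : F →L[ℝ] F, ‖P‖ ≤ δ → 1 / 2 ≤ |(1 + P).det|) (e : F ≃L[ℝ] F) (B : F →L[ℝ] F)
    (hB : ‖(e.symm : F →L[ℝ] F)‖ * ‖B - (e : F →L[ℝ] F)‖ ≤ δ) :
    |(e : F →L[ℝ] F).det| / 2 ≤ |B.det| := by
  have hB' : B = (e : F →L[ℝ] F) ∘L (1 + (e.symm : F →L[ℝ] F) ∘L (B - (e : F →L[ℝ] F))) := by
    ext v; simp
  have h := hδ _ ((opNorm_comp_le _ _).trans hB)
  rw [hB', det_comp, abs_mul]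
  nlinarith [abs_nonneg (e : F →L[ℝ] F).det]

end ContinuousLinearMap

variable [FiniteDimensional ℝ F]

namespace ContinuousLinearMap

noncomputable def adjugate (T : F →L[ℝ] F) : F →L[ℝ] F :=
  LinearMap.toContinuousLinearMap <| Matrix.toLin (Module.finBasis ℝ F) (Module.finBasis ℝ F)
    (LinearMap.toMatrix (Module.finBasis ℝ F) (Module.finBasis ℝ F) T).adjugate

theorem comp_adjugate (T : F →L[ℝ] F) : T ∘L T.adjugate = T.det • ContinuousLinearMap.id ℝ F := by
  set b := Module.finBasis ℝ F
  have h := congrArg (Matrix.toLin b b) (Matrix.mul_adjugate (LinearMap.toMatrix b b T))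
  rw [Matrix.toLin_mul b b b, Matrix.toLin_toMatrix, map_smul, Matrix.toLin_one,
    LinearMap.det_toMatrix] at h
  ext v
  exact congrArg (· v) h

theorem adjugate_smul (t : ℝ) (T : F →L[ℝ] F) :
    (t • T).adjugate = t ^ (Module.finrank ℝ F - 1) • T.adjugate := by
  simp only [adjugate, toLinearMap_smul, map_smul, Matrix.adjugate_smul, Fintype.card_fin]

theorem continuous_adjugate : Continuous (adjugate : (F →L[ℝ] F) → (F →L[ℝ] F)) := by
  set b := Module.finBasis ℝ F
  have hto : Continuous fun T : F →L[ℝ] F => LinearMap.toMatrix b b T :=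
    ((LinearMap.toMatrix b b).toLinearMap.comp (coeLM ℝ)).continuous_of_finiteDimensional
  have hof : Continuous fun M : Matrix (Fin (Module.finrank ℝ F)) (Fin (Module.finrank ℝ F)) ℝ =>
      LinearMap.toContinuousLinearMap (Matrix.toLin b b M) :=
    (LinearMap.toContinuousLinearMap.toLinearMap.comp
      (Matrix.toLin b b).toLinearMap).continuous_of_finiteDimensional
  exact hof.comp hto.matrix_adjugate

theorem adjugate_eq_det_smul_symm (e : F ≃L[ℝ] F) :
    (e : F →L[ℝ] F).adjugate = (e : F →L[ℝ] F).det • (e.symm : F →L[ℝ] F) := by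
  have h := congrArg ((e.symm : F →L[ℝ] F) ∘L ·) (comp_adjugate (e : F →L[ℝ] F))
  simpa [← comp_assoc] using h

theorem exists_norm_adjugate_le :
    ∃ C, 0 < C ∧ ∀ T : F →L[ℝ] F, ‖T.adjugate‖ ≤ C * ‖T‖ ^ (Module.finrank ℝ F - 1) :=
  exists_norm_le_mul_norm_pow_of_homogeneous continuous_adjugate fun t T _ => adjugate_smul t T

theorem abs_det_le_norm_mul_norm_adjugate [Nontrivial F] (T : F →L[ℝ] F) :
    |T.det| ≤ ‖T‖ * ‖T.adjugate‖ := by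
  have h := congrArg norm (comp_adjugate T)
  rw [norm_smul, norm_id, mul_one, Real.norm_eq_abs] at h
  exact h ▸ opNorm_comp_le _ _

theorem abs_det_le_of_norm_le [Nontrivial F] {c D : ℝ} (hc : 0 ≤ c)
    (hadj : ∀ T : F →L[ℝ] F, ‖T.adjugate‖ ≤ c * ‖T‖ ^ (Module.finrank ℝ F - 1))
    {T : F →L[ℝ] F} (hT : ‖T‖ ≤ D) : |T.det| ≤ c * D ^ Module.finrank ℝ F := by
  have hD : 0 ≤ D := (norm_nonneg T).trans hT
  calc |T.det| ≤ ‖T‖ * ‖T.adjugate‖ := abs_det_le_norm_mul_norm_adjugate T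
    _ ≤ D * (c * D ^ (Module.finrank ℝ F - 1)) := by gcongr; exact (hadj T).trans (by gcongr)
    _ = c * D ^ Module.finrank ℝ F := by
      rw [mul_left_comm, ← pow_succ', Nat.sub_add_cancel Module.finrank_pos]

end ContinuousLinearMap

namespace ContinuousLinearEquiv

theorem norm_symm_eq_norm_adjugate_div (e : F ≃L[ℝ] F) :
    ‖(e.symm : F →L[ℝ] F)‖ = ‖(e : F →L[ℝ] F).adjugate‖ / |(e : F →L[ℝ] F).det| := by
  have he : (e : F →L[ℝ] F).det ≠ 0 := e.toLinearEquiv.isUnit_det'.ne_zero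
  rw [adjugate_eq_det_smul_symm, norm_smul, Real.norm_eq_abs,
    mul_div_cancel_left₀ _ (abs_ne_zero.mpr he)]

theorem norm_symm_le_of_norm_le {c D r : ℝ} (hc : 0 ≤ c)
    (hadj : ∀ T : F →L[ℝ] F, ‖T.adjugate‖ ≤ c * ‖T‖ ^ (Module.finrank ℝ F - 1)) (e : F ≃L[ℝ] F)
    (hD : ‖(e : F →L[ℝ] F)‖ ≤ D) (hr : 0 < r) (hre : r ≤ |(e : F →L[ℝ] F).det|) :
    ‖(e.symm : F →L[ℝ] F)‖ ≤ c * D ^ (Module.finrank ℝ F - 1) / r := by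
  rw [e.norm_symm_eq_norm_adjugate_div]
  have hD₀ : 0 ≤ D := (norm_nonneg _).trans hD
  exact div_le_div₀ (by positivity) ((hadj _).trans (by gcongr)) hr hre

end ContinuousLinearEquiv

end LinearAlgebra

section ImplicitFunction

variable {E F : Type*} [NormedAddCommGroup E] [NormedSpace ℝ E] [NormedAddCommGroup F]
  [NormedSpace ℝ F]

theorem fderiv_comp_prodMk_right {G : E × F → F} {x : E} {y : F}
    (hG : DifferentiableAt ℝ G (x, y)) :
    fderiv ℝ (fun y' => G (x, y')) y = fderiv ℝ G (x, y) ∘L .inr ℝ E F :=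
  (hG.hasFDerivAt.comp y (hasFDerivAt_prodMk_right x y)).fderiv

theorem norm_fderiv_comp_inr_sub_le {G : E × F → F} {D : ℝ}
    (hG : ∀ p q, ‖fderiv ℝ G p - fderiv ℝ G q‖ ≤ D * ‖p - q‖) (x x' : E) (y y' : F) :
    ‖fderiv ℝ G (x, y) ∘L .inr ℝ E F - fderiv ℝ G (x', y') ∘L .inr ℝ E F‖ ≤
      D * max ‖x - x'‖ ‖y - y'‖ := by
  have h := hG (x, y) (x', y')
  rw [Prod.mk_sub_mk, Prod.norm_def] at h
  rw [← sub_comp]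
  exact (opNorm_comp_le _ _).trans
    (mul_le_of_le_one_right (norm_nonneg _) (norm_inr_le_one ℝ E F) |>.trans h)

theorem ContDiff.norm_fderiv_sub_le {G : E → F} {D : ℝ} (hG : ContDiff ℝ 2 G)
    (hG'' : ∀ p, ‖fderiv ℝ (fderiv ℝ G) p‖ ≤ D) (p q : E) :
    ‖fderiv ℝ G p - fderiv ℝ G q‖ ≤ D * ‖p - q‖ :=
  convex_univ.norm_image_sub_le_of_norm_fderiv_le
    (fun z _ => (hG.fderiv_right one_add_one_eq_two.le).differentiable one_ne_zero z)
    (fun z _ => hG'' z) (Set.mem_univ q) (Set.mem_univ p)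

theorem norm_apply_prodMk_sub_le {G : E × F → F} {D : ℝ} (hG : Differentiable ℝ G)
    (hG' : ∀ p, ‖fderiv ℝ G p‖ ≤ D) (x x' : E) (y : F) :
    ‖G (x, y) - G (x', y)‖ ≤ D * ‖x - x'‖ := by
  have h := convex_univ.norm_image_sub_le_of_norm_fderiv_le (fun p _ => hG p) (fun p _ => hG' p)
    (Set.mem_univ (x', y)) (Set.mem_univ (x, y))
  rwa [Prod.mk_sub_mk, sub_self, Prod.norm_def, norm_zero, max_eq_left (norm_nonneg _)] at h

theorem exists_unique_zero_of_norm_fderiv_sub_le [CompleteSpace E] {f : E → F} {e : E ≃L[ℝ] F}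
    {y₀ : E} {ε K c : ℝ} (hε : 0 ≤ ε) (hK : 0 < K) (hc : 0 ≤ c)
    (hf : ∀ y ∈ closedBall y₀ ε, DifferentiableAt ℝ f y)
    (hf' : ∀ y ∈ closedBall y₀ ε, ‖fderiv ℝ f y - e‖ ≤ c)
    (he : ‖(e.symm : F →L[ℝ] E)‖ ≤ K) (hKc : K * c ≤ 1 / 2) (hy₀ : ‖f y₀‖ ≤ ε / (4 * K)) :
    ∃ y ∈ closedBall y₀ (ε / 2), f y = 0 ∧ ∀ z ∈ closedBall y₀ ε, f z = 0 → z = y := by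
  have happrox : ApproximatesLinearOn f (e : E →L[ℝ] F) (closedBall y₀ ε) c.toNNReal :=
    fun y hy z hz => (convex_closedBall y₀ ε).norm_image_sub_le_of_norm_fderiv_le' hf
      (by rwa [Real.coe_toNNReal _ hc]) hz hy
  -- On the zero space `‖e.symm‖ = 0`, and `0⁻¹ = 0` collapses the radius of surjectivity.
  rcases subsingleton_or_nontrivial E with hE | hE
  · have : Subsingleton F := (Equiv.subsingleton_congr e.toEquiv).1 hE
    exact ⟨y₀, mem_closedBall_self (by positivity), Subsingleton.elim _ _,
      fun _ _ _ => Subsingleton.elim _ _⟩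
  have hN : 0 < ‖(e.symm : F →L[ℝ] E)‖ := by
    refine norm_pos_iff.mpr fun h => ?_
    obtain ⟨x, hx⟩ := exists_ne (0 : E)
    exact hx (by simpa using congrArg (· (e x)) h)
  have hcK : c ≤ K⁻¹ / 2 := by
    rw [le_div_iff₀ two_pos, ← one_div, le_div_iff₀ hK]; linarith
  have hKN : K⁻¹ ≤ ‖(e.symm : F →L[ℝ] E)‖⁻¹ := inv_anti₀ hN he
  have hcN : c < ‖(e.symm : F →L[ℝ] E)‖⁻¹ := by linarith [inv_pos.mpr hK]
  obtain ⟨y, hy, hfy⟩ : ∃ y ∈ closedBall y₀ (ε / 2), f y = 0 := by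
    refine happrox.surjOn_closedBall_of_nonlinearRightInverse e.toNonlinearRightInverse
      (by positivity) (closedBall_subset_closedBall (by linarith)) ?_
    rw [mem_closedBall, dist_zero_left]
    refine hy₀.trans ?_
    rw [Real.coe_toNNReal _ hc]
    change ε / (4 * K) ≤ (‖(e.symm : F →L[ℝ] E)‖⁻¹ - c) * (ε / 2)
    calc ε / (4 * K) = K⁻¹ / 2 * (ε / 2) := by field_simp; ring
      _ ≤ _ := by gcongr; linarith
  refine ⟨y, hy, hfy, fun z hz hfz => happrox.injOn (Or.inr ?_) hz
    (closedBall_subset_closedBall (by linarith) hy) (hfz.trans hfy.symm)⟩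
  rwa [← NNReal.coe_lt_coe, NNReal.coe_inv, coe_nnnorm, Real.coe_toNNReal _ hc]

theorem contDiffOn_of_unique_implicit [CompleteSpace E] [CompleteSpace F] {F' : Type*}
    [NormedAddCommGroup F'] [NormedSpace ℝ F'] [CompleteSpace F'] {G : E × F → F'} {H : E → F}
    {U : Set E} {V : Set F} {k : WithTop ℕ∞} (hk : k ≠ 0) (hU : IsOpen U) (hV : IsOpen V)
    (hG : ∀ x ∈ U, ContDiffAt ℝ k G (x, H x))
    (hinv : ∀ x ∈ U, (fderiv ℝ G (x, H x) ∘L .inr ℝ E F).IsInvertible)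
    (hHV : Set.MapsTo H U V) (hGH : ∀ x ∈ U, G (x, H x) = 0)
    (huniq : ∀ x ∈ U, ∀ y ∈ V, G (x, y) = 0 → y = H x) :
    ContDiffOn ℝ k H U := by
  intro x hx
  set ψ := (hG x hx).implicitFunction hk (hinv x hx)
  have hψ : ContDiffAt ℝ k ψ x := (hG x hx).contDiffAt_implicitFunction hk (hinv x hx)
  have hψx : ψ x = H x := (hG x hx).implicitFunction_apply_self hk (hinv x hx)
  have hψV : ∀ᶠ x' in 𝓝 x, ψ x' ∈ V :=
    hψ.continuousAt.preimage_mem_nhds (hV.mem_nhds (hψx ▸ hHV hx))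
  have hHψ : H =ᶠ[𝓝 x] ψ := by
    filter_upwards [(hG x hx).eventually_apply_implicitFunction hk (hinv x hx),
      hU.mem_nhds hx, hψV] with x' hGψ hx' hψx'
    exact (huniq x' hx' _ hψx' (hGψ.trans (hGH x hx))).symm
  exact (hψ.congr_of_eventuallyEq hHψ).contDiffWithinAt

theorem exists_unique_zero_and_half_abs_det_le [FiniteDimensional ℝ F] {δ : ℝ} (hδ : δ ≤ 1 / 2)
    (hdet : ∀ P : F →L[ℝ] F, ‖P‖ ≤ δ → 1 / 2 ≤ |(1 + P).det|) {G : E × F → F} {x₀ x : E}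
    {y₀ : F} {D K ε : ℝ} (hG : Differentiable ℝ G) (hG₀ : G (x₀, y₀) = 0)
    (hG' : ∀ p, ‖fderiv ℝ G p‖ ≤ D) (hG'' : ∀ p q, ‖fderiv ℝ G p - fderiv ℝ G q‖ ≤ D * ‖p - q‖)
    (e : F ≃L[ℝ] F) (he : (e : F →L[ℝ] F) = fderiv ℝ G (x₀, y₀) ∘L .inr ℝ E F)
    (hK : ‖(e.symm : F →L[ℝ] F)‖ ≤ K) (hK₀ : 0 < K) (hKDε : K * (D * ε) ≤ δ)
    (hxε : ‖x - x₀‖ ≤ ε) (hx : D * ‖x - x₀‖ ≤ ε / (4 * K)) :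
    (∃ y ∈ closedBall y₀ (ε / 2), G (x, y) = 0 ∧ ∀ z ∈ closedBall y₀ ε, G (x, z) = 0 → z = y) ∧
      ∀ y ∈ closedBall y₀ ε,
        |(e : F →L[ℝ] F).det| / 2 ≤ |(fderiv ℝ G (x, y) ∘L .inr ℝ E F).det| := by
  have hD : 0 ≤ D := (norm_nonneg _).trans (hG' 0)
  have hε : 0 ≤ ε := (norm_nonneg _).trans hxε
  have hclose : ∀ y ∈ closedBall y₀ ε,
      ‖fderiv ℝ G (x, y) ∘L .inr ℝ E F - (e : F →L[ℝ] F)‖ ≤ D * ε := fun y hy =>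
    he ▸ (norm_fderiv_comp_inr_sub_le hG'' x x₀ y y₀).trans
      (by gcongr; exact max_le hxε (mem_closedBall_iff_norm.mp hy))
  have hGx : ‖G (x, y₀)‖ ≤ ε / (4 * K) :=
    (by simpa [hG₀] using norm_apply_prodMk_sub_le hG hG' x x₀ y₀ : ‖G (x, y₀)‖ ≤ _).trans hx
  refine ⟨exists_unique_zero_of_norm_fderiv_sub_le (c := D * ε) hε hK₀ (by positivity)
    (fun y _ => (hG _).comp y (hasFDerivAt_prodMk_right x y).differentiableAt)
    (fun y hy => ?_) hK (hKDε.trans hδ) hGx, fun y hy => ?_⟩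
  · rw [fderiv_comp_prodMk_right (hG _)]
    exact hclose y hy
  · exact half_abs_det_le_abs_det hdet e _
      ((mul_le_mul hK (hclose y hy) (norm_nonneg _) hK₀.le).trans hKDε)

theorem exists_implicitFunction_on_ball [CompleteSpace E] [FiniteDimensional ℝ F] {δ : ℝ}
    (hδ₀ : 0 < δ) (hδ : δ ≤ 1 / 2) (hdet : ∀ P : F →L[ℝ] F, ‖P‖ ≤ δ → 1 / 2 ≤ |(1 + P).det|)
    {G : E × F → F} {x₀ : E} {y₀ : F} {D K : ℝ} (hG : ContDiff ℝ 1 G) (hG₀ : G (x₀, y₀) = 0)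
    (hD : 0 < D) (hG' : ∀ p, ‖fderiv ℝ G p‖ ≤ D)
    (hG'' : ∀ p q, ‖fderiv ℝ G p - fderiv ℝ G q‖ ≤ D * ‖p - q‖)
    (e : F ≃L[ℝ] F) (he : (e : F →L[ℝ] F) = fderiv ℝ G (x₀, y₀) ∘L .inr ℝ E F)
    (hK : ‖(e.symm : F →L[ℝ] F)‖ ≤ K) (hKD : 1 ≤ K * D) :
    ∃ H : E → F, ContDiffOn ℝ 1 H (ball x₀ (δ / (4 * (K * D) ^ 2))) ∧
      ∀ x ∈ ball x₀ (δ / (4 * (K * D) ^ 2)), G (x, H x) = 0 ∧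
        |(e : F →L[ℝ] F).det| / 2 ≤ |(fderiv ℝ G (x, H x) ∘L .inr ℝ E F).det| := by
  have hK₀ : 0 < K := pos_of_mul_pos_left (one_pos.trans_le hKD) hD.le
  set ε := δ / (K * D) with hε
  set ρ := δ / (4 * (K * D) ^ 2) with hρ
  have hε₀ : 0 < ε := by positivity
  have hρε : ρ = ε / (4 * (K * D)) := by rw [hρ, hε]; field_simp
  have hKDε : K * (D * ε) = δ := by rw [hε]; field_simp
  have hpt : ∀ x ∈ ball x₀ ρ, _ := fun x hx =>
    have hx' : ‖x - x₀‖ ≤ ρ := (mem_ball_iff_norm.mp hx).le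
    exists_unique_zero_and_half_abs_det_le hδ hdet (hG.differentiable one_ne_zero) hG₀ hG' hG''
      e he hK hK₀ hKDε.le (hx'.trans (hρε ▸ div_le_self hε₀.le (by linarith)))
      ((mul_le_mul_of_nonneg_left hx' hD.le).trans_eq (by rw [hρε]; field_simp))
  choose! H hHε hHG hHuniq using fun x hx => (hpt x hx).1
  have hHball : Set.MapsTo H (ball x₀ ρ) (ball y₀ ε) := fun x hx =>
    closedBall_subset_ball (by linarith) (hHε x hx)
  have hdetH : ∀ x ∈ ball x₀ ρ,
      |(e : F →L[ℝ] F).det| / 2 ≤ |(fderiv ℝ G (x, H x) ∘L .inr ℝ E F).det| := fun x hx =>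
    (hpt x hx).2 _ (ball_subset_closedBall (hHball hx))
  have hdet₀ : 0 < |(e : F →L[ℝ] F).det| := abs_pos.mpr e.toLinearEquiv.isUnit_det'.ne_zero
  refine ⟨H, contDiffOn_of_unique_implicit one_ne_zero isOpen_ball isOpen_ball
    (fun x _ => hG.contDiffAt) (fun x hx => ⟨_, coe_toContinuousLinearEquivOfDetNeZero _
      (abs_pos.mp ((half_pos hdet₀).trans_le (hdetH x hx)))⟩) hHball hHG
    (fun x hx y hy hGy => hHuniq x hx y (ball_subset_closedBall hy) hGy),
    fun x hx => ⟨hHG x hx, hdetH x hx⟩⟩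

end ImplicitFunction

theorem exists_implicitFunction_on_ball_of_le_abs_det {E F : Type*} [NormedAddCommGroup E]
    [NormedSpace ℝ E] [CompleteSpace E] [NormedAddCommGroup F] [NormedSpace ℝ F]
    [FiniteDimensional ℝ F] [Nontrivial F] :
    ∃ κ : ℝ, 0 < κ ∧ ∀ (G : E × F → F) (x₀ : E) (y₀ : F) (D r : ℝ), ContDiff ℝ 1 G →
      G (x₀, y₀) = 0 → 0 < D → (∀ p, ‖fderiv ℝ G p‖ ≤ D) →
      (∀ p q, ‖fderiv ℝ G p - fderiv ℝ G q‖ ≤ D * ‖p - q‖) →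
      0 < r → r ≤ |(fderiv ℝ (fun y => G (x₀, y)) y₀).det| →
      ∃ H : E → F, ContDiffOn ℝ 1 H (ball x₀ (r ^ 2 / (κ * D ^ (2 * Module.finrank ℝ F)))) ∧
        ∀ x ∈ ball x₀ (r ^ 2 / (κ * D ^ (2 * Module.finrank ℝ F))),
          G (x, H x) = 0 ∧ r / 2 ≤ |(fderiv ℝ (fun y => G (x, y)) (H x)).det| := by
  obtain ⟨c, hc, hadj⟩ := exists_norm_adjugate_le (F := F)
  obtain ⟨δ, hδ, hdet⟩ := exists_half_le_abs_det_one_add (F := F)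
  refine ⟨4 * c ^ 2 / min δ (1 / 2), by positivity, ?_⟩
  intro G x₀ y₀ D r hG hG₀ hD hG' hG'' hr hrA
  have hGd : Differentiable ℝ G := hG.differentiable one_ne_zero
  set n := Module.finrank ℝ F
  set A := fderiv ℝ G (x₀, y₀) ∘L .inr ℝ E F
  rw [fderiv_comp_prodMk_right (hGd _)] at hrA
  have hA : ‖A‖ ≤ D := (opNorm_comp_le _ _).trans <|
    (mul_le_of_le_one_right (norm_nonneg _) (norm_inr_le_one ℝ E F)).trans (hG' _)
  have hrD : r ≤ c * D ^ n := hrA.trans (abs_det_le_of_norm_le hc.le hadj hA)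
  set e := A.toContinuousLinearEquivOfDetNeZero (abs_pos.mp (hr.trans_le hrA))
  have hKD : c * D ^ (n - 1) / r * D = c * D ^ n / r := by
    rw [div_mul_eq_mul_div, mul_assoc, ← pow_succ, Nat.sub_add_cancel Module.finrank_pos]
  obtain ⟨H, hH, hHG⟩ := exists_implicitFunction_on_ball (lt_min hδ one_half_pos)
    (min_le_right _ _) (fun P hP => hdet P (hP.trans (min_le_left _ _))) hG hG₀ hD hG' hG'' e
    (coe_toContinuousLinearEquivOfDetNeZero _ _) (e.norm_symm_le_of_norm_le hc.le hadj hA hr hrA)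
    (by rw [hKD, le_div_iff₀ hr, one_mul]; exact hrD)
  have hρ : min δ (1 / 2) / (4 * (c * D ^ (n - 1) / r * D) ^ 2) =
      r ^ 2 / (4 * c ^ 2 / min δ (1 / 2) * D ^ (2 * n)) := by
    rw [hKD]; field_simp; ring
  rw [hρ] at hH hHG
  refine ⟨H, hH, fun x hx => ⟨(hHG x hx).1, ?_⟩⟩
  rw [fderiv_comp_prodMk_right (hGd _)]
  have := (hHG x hx).2
  rw [coe_toContinuousLinearEquivOfDetNeZero] at this
  linarith

theorem rpow_neg_two_mul_add_one_le_inv_pow {D a : ℝ} (hD : 1 ≤ D) (ha : 1 ≤ a) (n : ℕ) :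
    D ^ (-(2 * (a + n)) + 1) ≤ (D ^ (2 * n))⁻¹ := by
  rw [← Real.rpow_natCast, ← Real.rpow_neg (by positivity)]
  refine Real.rpow_le_rpow_of_exponent_le hD ?_
  push_cast
  linarith

/-- Quantitative implicit function theorem: if `G : ℝ^{d₁+d₂} → ℝ^{d₂}` is `C²` with
`G(x₀,y₀) = 0`, `D ≥ max(1, ‖G‖_{C²})` and `0 < r ≤ |det D_y G(x₀,y₀)|`, then with
`C₂ = C(d₁+d₂) D^{-2(d₁+d₂)+1}` there is a `C¹` map `H` on `B(x₀, C₂ r²)` with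
`G(x, H(x)) = 0` and `|det D_y G(x, H(x))| ≥ r/2` there. -/
theorem stmt6 (d₁ d₂ : ℕ) :
    ∃ C : ℝ, 0 < C ∧
      ∀ (G : EuclideanSpace ℝ (Fin d₁) × EuclideanSpace ℝ (Fin d₂) → EuclideanSpace ℝ (Fin d₂))
        (x₀ : EuclideanSpace ℝ (Fin d₁)) (y₀ : EuclideanSpace ℝ (Fin d₂)) (D r : ℝ),
        ContDiff ℝ 2 G → G (x₀, y₀) = 0 → 1 ≤ D →
        (∀ p, ‖G p‖ ≤ D) →
        (∀ p, ‖fderiv ℝ G p‖ ≤ D) →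
        (∀ p, ‖fderiv ℝ (fderiv ℝ G) p‖ ≤ D) →
        0 < r → r ≤ |(fderiv ℝ (fun y => G (x₀, y)) y₀).det| →
        ∃ H : EuclideanSpace ℝ (Fin d₁) → EuclideanSpace ℝ (Fin d₂),
          ContDiffOn ℝ 1 H
            (Metric.ball x₀ (C * Real.rpow D (-(2 * ((d₁ : ℝ) + (d₂ : ℝ))) + 1) * r ^ 2)) ∧
          ∀ x ∈ Metric.ball x₀ (C * Real.rpow D (-(2 * ((d₁ : ℝ) + (d₂ : ℝ))) + 1) * r ^ 2),
            G (x, H x) = 0 ∧ r / 2 ≤ |(fderiv ℝ (fun y => G (x, y)) (H x)).det| := by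
  rcases Nat.eq_zero_or_pos d₂ with rfl | hd₂
  · refine ⟨1, one_pos, fun G x₀ y₀ D r _ _ _ _ _ _ _ hr => ⟨fun _ => y₀, contDiffOn_const,
      fun x _ => ⟨Subsingleton.elim _ _, ?_⟩⟩⟩
    simp only [ContinuousLinearMap.det, LinearMap.det_eq_one_of_subsingleton, abs_one] at hr ⊢
    linarith
  have : NeZero d₂ := ⟨hd₂.ne'⟩
  obtain ⟨κ, hκ, hIFT⟩ := exists_implicitFunction_on_ball_of_le_abs_det
    (E := EuclideanSpace ℝ (Fin d₁)) (F := EuclideanSpace ℝ (Fin d₂))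
  refine ⟨κ⁻¹, inv_pos.mpr hκ, fun G x₀ y₀ D r hG hG₀ hD _ hG' hG'' hr hrA => ?_⟩
  obtain ⟨H, hH, hHG⟩ := hIFT G x₀ y₀ D r (hG.of_le one_le_two) hG₀ (by linarith) hG'
    (hG.norm_fderiv_sub_le hG'') hr hrA
  rw [finrank_euclideanSpace_fin] at hH hHG
  have hsub : ball x₀ (κ⁻¹ * Real.rpow D (-(2 * ((d₁ : ℝ) + d₂)) + 1) * r ^ 2) ⊆
      ball x₀ (r ^ 2 / (κ * D ^ (2 * d₂))) := by
    rcases Nat.eq_zero_or_pos d₁ with rfl | hd₁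
    · intro x _
      rw [Subsingleton.elim x x₀]
      exact mem_ball_self (by positivity)
    refine ball_subset_ball ?_
    calc κ⁻¹ * Real.rpow D (-(2 * ((d₁ : ℝ) + d₂)) + 1) * r ^ 2
        ≤ κ⁻¹ * (D ^ (2 * d₂))⁻¹ * r ^ 2 := by
          gcongr; exact rpow_neg_two_mul_add_one_le_inv_pow hD (Nat.one_le_cast.mpr hd₁) d₂
      _ = r ^ 2 / (κ * D ^ (2 * d₂)) := by rw [div_eq_mul_inv, mul_inv]; ring
  exact ⟨H, hH.mono hsub, fun x hx => hHG x (hsub hx)⟩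
end

section
/- For every 0 < r, in the plane ℝ² the Lebesgue area of the intersection of two closed Euclidean disks of radius r whose centers are at distance r from each other equals (2π/3 - √3/2) r², and in particular is at least r². -/
/-!
Translating and reflecting, the two disks may be taken centred at `(0, 0)` and `(r, 0)`. The
vertical chord of their intersection at abscissa `x` has length `2 √(r² - max (x², (x - r)²))`,
so by Fubini the area is the integral of this function over `[0, r]`. It is symmetric about
`x = r / 2`, and on `[r / 2, r]` it is `2 √(r² - x²)`; the substitution `x = r sin θ` gives
`∫_{r/2}^r √(r² - x²) dx = (π/6 - √3/8) r²`.
-/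

open MeasureTheory Real intervalIntegral Metric Set

theorem integral_sqrt_one_sub_sq_one_half_one :
    ∫ t in (1 / 2 : ℝ)..1, √(1 - t ^ 2) = π / 6 - √3 / 8 := by
  calc ∫ t in (1 / 2 : ℝ)..1, √(1 - t ^ 2)
      = ∫ t in sin (π / 6)..sin (π / 2), √(1 - t ^ 2) := by
        rw [sin_pi_div_six, sin_pi_div_two]
    _ = ∫ θ in (π / 6)..(π / 2), √(1 - sin θ ^ 2) * cos θ :=
        (integral_comp_mul_deriv (fun x _ => hasDerivAt_sin x) continuousOn_cos
          (by fun_prop)).symm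
    _ = ∫ θ in (π / 6)..(π / 2), cos θ ^ 2 := by
        refine integral_congr fun θ hθ => ?_
        rw [uIcc_of_le (by linarith [pi_pos])] at hθ
        rw [← cos_eq_sqrt_one_sub_sin_sq (by linarith [pi_pos, hθ.1]) hθ.2, sq]
    _ = π / 6 - √3 / 8 := by
        rw [integral_cos_sq, cos_pi_div_two, sin_pi_div_two, cos_pi_div_six, sin_pi_div_six]
        ring

theorem integral_sqrt_sq_sub_sq_half_self {r : ℝ} (hr : 0 ≤ r) :
    ∫ x in (r / 2)..r, √(r ^ 2 - x ^ 2) = (π / 6 - √3 / 8) * r ^ 2 := by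
  have hscale : ∀ t, √(r ^ 2 - (r * t) ^ 2) = r * √(1 - t ^ 2) := fun t => by
    rw [show r ^ 2 - (r * t) ^ 2 = r ^ 2 * (1 - t ^ 2) by ring, sqrt_mul (sq_nonneg r),
      sqrt_sq hr]
  have := smul_integral_comp_mul_left (a := 1 / 2) (b := 1) (fun x => √(r ^ 2 - x ^ 2)) r
  simp only [hscale, intervalIntegral.integral_const_mul, integral_sqrt_one_sub_sq_one_half_one,
    smul_eq_mul, mul_one, mul_one_div] at this
  rw [← this]
  ring

theorem volume_setOf_sq_le (c : ℝ) : volume {y : ℝ | y ^ 2 ≤ c} = ENNReal.ofReal (2 * √c) := by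
  rcases le_or_gt 0 c with hc | hc
  · have : {y : ℝ | y ^ 2 ≤ c} = Icc (-√c) √c := by ext y; simp [Real.sq_le hc]
    rw [this, volume_Icc]
    ring_nf
  · have : {y : ℝ | y ^ 2 ≤ c} = ∅ :=
      eq_empty_of_forall_notMem fun y hy => (hc.trans_le (sq_nonneg y)).not_ge hy
    rw [this, sqrt_eq_zero_of_nonpos hc.le]
    simp

def planeLens (r : ℝ) : Set (ℝ × ℝ) :=
  {p | p.1 ^ 2 + p.2 ^ 2 ≤ r ^ 2 ∧ (p.1 - r) ^ 2 + p.2 ^ 2 ≤ r ^ 2}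

noncomputable def lensChord (r x : ℝ) : ℝ := 2 * √(r ^ 2 - max (x ^ 2) ((x - r) ^ 2))

theorem isClosed_planeLens (r : ℝ) : IsClosed (planeLens r) := by
  rw [planeLens, ofPred_and]
  exact (isClosed_le (by fun_prop) (by fun_prop)).inter (isClosed_le (by fun_prop) (by fun_prop))

theorem volume_planeLens_eq_lintegral_lensChord (r : ℝ) :
    volume (planeLens r) = ∫⁻ x, ENNReal.ofReal (lensChord r x) := by
  rw [Measure.volume_eq_prod, Measure.prod_apply (isClosed_planeLens r).measurableSet]
  refine lintegral_congr fun x => ?_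
  rw [lensChord, ← volume_setOf_sq_le]
  congr 1
  ext y
  simp only [planeLens, mem_preimage, mem_ofPred_eq]
  rw [le_sub_comm, max_le_iff]
  constructor <;> rintro ⟨h₁, h₂⟩ <;> constructor <;> linarith

theorem continuous_lensChord (r : ℝ) : Continuous (lensChord r) := by
  unfold lensChord
  fun_prop

theorem lensChord_nonneg (r x : ℝ) : 0 ≤ lensChord r x := by
  unfold lensChord
  positivity

theorem lensChord_sub_left (r x : ℝ) : lensChord r (r - x) = lensChord r x := by
  rw [lensChord, lensChord, max_comm]
  ring_nf

theorem lensChord_of_half_le {r x : ℝ} (hr : 0 ≤ r) (hx : r / 2 ≤ x) :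
    lensChord r x = 2 * √(r ^ 2 - x ^ 2) := by
  rw [lensChord, max_eq_left (by nlinarith)]

theorem support_lensChord_subset {r : ℝ} (hr : 0 ≤ r) :
    Function.support (lensChord r) ⊆ Ioo 0 r := by
  intro x hx
  refine ⟨lt_of_not_ge fun h => hx ?_, lt_of_not_ge fun h => hx ?_⟩ <;>
    rw [lensChord, sqrt_eq_zero_of_nonpos, mul_zero]
  · nlinarith [le_max_right (x ^ 2) ((x - r) ^ 2)]
  · nlinarith [le_max_left (x ^ 2) ((x - r) ^ 2)]

theorem integral_lensChord {r : ℝ} (hr : 0 ≤ r) :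
    ∫ x, lensChord r x = (2 * π / 3 - √3 / 2) * r ^ 2 := by
  have hint : ∀ a b, IntervalIntegrable (lensChord r) volume a b :=
    fun a b => (continuous_lensChord r).intervalIntegrable a b
  have hright : ∫ x in (r / 2)..r, lensChord r x = 2 * ((π / 6 - √3 / 8) * r ^ 2) := by
    rw [← integral_sqrt_sq_sub_sq_half_self hr, ← intervalIntegral.integral_const_mul]
    refine integral_congr fun x hx => lensChord_of_half_le hr ?_
    rw [uIcc_of_le (by linarith)] at hx
    exact hx.1
  have hleft : ∫ x in (0 : ℝ)..(r / 2), lensChord r x = ∫ x in (r / 2)..r, lensChord r x :=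
    calc ∫ x in (0 : ℝ)..(r / 2), lensChord r x
        = ∫ x in (0 : ℝ)..(r / 2), lensChord r (r - x) := by simp only [lensChord_sub_left]
      _ = ∫ x in (r / 2)..r, lensChord r x := by
        rw [integral_comp_sub_left, sub_zero, sub_half]
  rw [← integral_eq_integral_of_support_subset
      ((support_lensChord_subset hr).trans Ioo_subset_Ioc_self),
    ← integral_add_adjacent_intervals (hint 0 (r / 2)) (hint (r / 2) r), hleft, hright]
  ring

theorem volume_planeLens {r : ℝ} (hr : 0 ≤ r) :
    volume (planeLens r) = ENNReal.ofReal ((2 * π / 3 - √3 / 2) * r ^ 2) := by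
  have hcompact : HasCompactSupport (lensChord r) :=
    HasCompactSupport.intro isCompact_Icc fun x hx => Function.notMem_support.1 fun hx' =>
      hx (Ioo_subset_Icc_self (support_lensChord_subset hr hx'))
  rw [volume_planeLens_eq_lintegral_lensChord, ← integral_lensChord hr,
    ofReal_integral_eq_lintegral_ofReal
      ((continuous_lensChord r).integrable_of_hasCompactSupport hcompact)
      (ae_of_all _ (lensChord_nonneg r))]

theorem EuclideanSpace.closedBall_eq {ι : Type*} [Fintype ι] (c : EuclideanSpace ℝ ι) {r : ℝ}
    (hr : 0 ≤ r) : closedBall c r = {x | ∑ i, (x i - c i) ^ 2 ≤ r ^ 2} := by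
  ext x
  simp only [mem_closedBall, EuclideanSpace.dist_eq, Real.dist_eq, sq_abs, sqrt_le_left hr,
    mem_ofPred_eq]

theorem volume_closedBall_zero_inter_closedBall_eq_volume_planeLens {r : ℝ} (hr : 0 ≤ r) :
    volume (closedBall (0 : EuclideanSpace ℝ (Fin 2)) r ∩ closedBall !₂[r, 0] r) =
      volume (planeLens r) := by
  have hφ := (volume_preserving_finTwoArrow ℝ).comp (PiLp.volume_preserving_ofLp (Fin 2))
  rw [← hφ.measure_preimage (isClosed_planeLens r).measurableSet.nullMeasurableSet]
  congr 1
  ext x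
  simp [planeLens, EuclideanSpace.closedBall_eq _ hr, Fin.sum_univ_two,
    MeasurableEquiv.finTwoArrow]

theorem measure_closedBall_inter_closedBall_eq_sub {E : Type*} [NormedAddCommGroup E]
    [MeasurableSpace E] [MeasurableAdd E] (μ : Measure E) [μ.IsAddLeftInvariant] (w₁ w₂ : E)
    (r₁ r₂ : ℝ) :
    μ (closedBall w₁ r₁ ∩ closedBall w₂ r₂) = μ (closedBall 0 r₁ ∩ closedBall (w₂ - w₁) r₂) := by
  rw [← measure_preimage_add μ w₁, preimage_inter, preimage_add_closedBall,
    preimage_add_closedBall, sub_self]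

section InnerProductSpace

variable {E : Type*} [NormedAddCommGroup E] [InnerProductSpace ℝ E] [FiniteDimensional ℝ E]
  [MeasurableSpace E] [BorelSpace E]

theorem volume_closedBall_zero_inter_closedBall_congr_norm {a b : E} (hab : ‖a‖ = ‖b‖)
    (r₁ r₂ : ℝ) :
    volume (closedBall 0 r₁ ∩ closedBall a r₂) = volume (closedBall 0 r₁ ∩ closedBall b r₂) := by
  set T := Submodule.reflection (ℝ ∙ (b - a))ᗮ
  have hpre : T ⁻¹' (closedBall 0 r₁ ∩ closedBall b r₂) = closedBall 0 r₁ ∩ closedBall a r₂ := by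
    rw [preimage_inter, T.preimage_closedBall, T.preimage_closedBall, map_zero,
      Submodule.reflection_symm, Submodule.reflection_sub hab.symm]
  rw [← hpre]
  exact T.measurePreserving.measure_preimage
    (isClosed_closedBall.inter isClosed_closedBall).measurableSet.nullMeasurableSet

theorem volume_closedBall_inter_closedBall_congr_dist {w₁ w₂ v₁ v₂ : E}
    (h : dist w₁ w₂ = dist v₁ v₂) (r₁ r₂ : ℝ) :
    volume (closedBall w₁ r₁ ∩ closedBall w₂ r₂) =
      volume (closedBall v₁ r₁ ∩ closedBall v₂ r₂) := by
  rw [measure_closedBall_inter_closedBall_eq_sub, measure_closedBall_inter_closedBall_eq_sub _ v₁,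
    volume_closedBall_zero_inter_closedBall_congr_norm]
  rwa [← dist_eq_norm', ← dist_eq_norm']

end InnerProductSpace

theorem one_le_two_mul_pi_div_three_sub_sqrt_three_div_two : 1 ≤ 2 * π / 3 - √3 / 2 := by
  nlinarith [sq_sqrt (show (0 : ℝ) ≤ 3 by norm_num), sqrt_nonneg 3, pi_gt_three]

/-- The area of the intersection of two Euclidean disks of radius `r` in the plane whose
centers are at distance `r` equals `(2π/3 - √3/2) r²`, and in particular is at least `r²`. -/
theorem stmt11 (r : ℝ) (hr : 0 < r) (w₁ w₂ : EuclideanSpace ℝ (Fin 2))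
    (h : dist w₁ w₂ = r) :
    volume (Metric.closedBall w₁ r ∩ Metric.closedBall w₂ r) =
      ENNReal.ofReal ((2 * π / 3 - Real.sqrt 3 / 2) * r ^ 2) ∧
    ENNReal.ofReal (r ^ 2) ≤
      volume (Metric.closedBall w₁ r ∩ Metric.closedBall w₂ r) := by
  have hdist : dist w₁ w₂ = dist (0 : EuclideanSpace ℝ (Fin 2)) !₂[r, 0] := by
    simp [h, EuclideanSpace.dist_eq, hr.le]
  have harea : volume (closedBall w₁ r ∩ closedBall w₂ r) =
      ENNReal.ofReal ((2 * π / 3 - √3 / 2) * r ^ 2) := by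
    rw [volume_closedBall_inter_closedBall_congr_dist hdist,
      volume_closedBall_zero_inter_closedBall_eq_volume_planeLens hr.le, volume_planeLens hr.le]
  refine ⟨harea, harea ▸ ENNReal.ofReal_le_ofReal ?_⟩
  exact le_mul_of_one_le_left (sq_nonneg r) one_le_two_mul_pi_div_three_sub_sqrt_three_div_two
end
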